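/- There exists a constant C ≥ 1 such that for every positive integer n divisible by 6 there are a subset V of G_n = Z_2 ≀ Z_n, a number r > 0, and a bijection ψ from the vertex set of the binary tree T_{n/3} onto V satisfying r·d_T(s,s') ≤ ρ(ψ(s),ψ(s')) ≤ C·r·d_T(s,s') for all vertices s, s' of T_{n/3}. That is, the Cayley graph of Z_2 ≀ Z_n with generating set {t, ta} contains a subset bilipschitz equivalent to a binary tree of depth proportional to n, with distortion bounded by an absolute constant independent of n. -/

import Mathlib

open scoped symmDiff

/-- Elements of the lamplighter group `Z₂ ≀ Z_n`: a set of lit lamps and a position. -/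
abbrev Lamp (n : ℕ) := Set (ZMod n) × ZMod n

/-- Group multiplication `(x,g)·(y,h) = (x △ (g+y), g+h)`. -/
def lampMul {n : ℕ} (u v : Lamp n) : Lamp n :=
  (u.1 ∆ ((u.2 + ·) '' v.1), u.2 + v.2)

/-- Group inverse in the lamplighter group. -/
def lampInv {n : ℕ} (u : Lamp n) : Lamp n :=
  ((· - u.2) '' u.1, -u.2)

/-- The generator `t = (∅, 1)`. -/
def lampT (n : ℕ) : Lamp n := (∅, 1)

/-- The generator `a = ({0}, 0)`. -/
def lampA (n : ℕ) : Lamp n := ({0}, 0)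

/-- The generator `ta`. -/
def lampTA (n : ℕ) : Lamp n := lampMul (lampT n) (lampA n)

/-- Word metric w.r.t. a generating set `S`: the least `m` such that `u⁻¹v`
is a product of `m` elements of `S ∪ S⁻¹`, i.e. `v = u·s₁⋯s_m`. -/
noncomputable def wordDist {n : ℕ} (S : Set (Lamp n)) (u v : Lamp n) : ℕ :=
  sInf {m | ∃ w : List (Lamp n), w.length = m ∧
    (∀ s ∈ w, s ∈ S ∨ ∃ g ∈ S, s = lampInv g) ∧ v = w.foldl lampMul u}

/-- The word metric `ρ` on `Z₂ ≀ Z_n` w.r.t. the generating set `{t, ta}`. -/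
noncomputable def lampDist (n : ℕ) (u v : Lamp n) : ℕ :=
  wordDist {lampT n, lampTA n} u v

/-- Length of the longest common prefix of two vertices of the binary tree. -/
def lgc : List Bool → List Bool → ℕ
  | a :: as, b :: bs => if a = b then lgc as bs + 1 else 0
  | _, _ => 0

/-- Graph distance in the binary tree (vertices = `{0,1}`-sequences). -/
def treeDist (A B : List Bool) : ℕ := A.length + B.length - 2 * lgc A B

/-- The arc `{a, a+1, ..., a+m}` in `Z_n`. -/
def arcSet (n : ℕ) (a : ZMod n) (m : ℕ) : Set (ZMod n) :=
  {z | ∃ i ≤ m, z = a + (i : ZMod n)}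

/-- The arc `P₁ = {n/6, ..., 5n/6}` of `Z_n` (identified with `{0,...,n-1}` via `val`). -/
def P1set (n : ℕ) : Set (ZMod n) := {z | n / 6 ≤ z.val ∧ z.val ≤ 5 * n / 6}

/-- The subset `P_{1,n} = {(x,k) ∈ G_n : k ∈ P₁}`. -/
def lampP1 (n : ℕ) : Set (Lamp n) := {u | u.2 ∈ P1set n}

/-- The set `W_n ⊆ T_n × T_n`. -/
def Wset (n : ℕ) : Set (List Bool × List Bool) :=
  {p | p.1.length + p.2.length = n ∧ n / 6 ≤ p.1.length ∧ p.1.length ≤ 5 * n / 6}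

open Classical in
/-- The map `φ_{1,n} : P_{1,n} → W_n`. -/
noncomputable def phi1 (n : ℕ) (u : Lamp n) : List Bool × List Bool :=
  ((List.range u.2.val).map fun j => if ((j : ℕ) : ZMod n) ∈ u.1 then true else false,
   (List.range (n - u.2.val)).map fun i => if ((n - 1 - i : ℕ) : ZMod n) ∈ u.1 then true else false)

/-- "X admits an equivalent uniformly convex norm" (= superreflexivity, by Enflo). -/
def HasEquivUnifConvexNorm (X : Type*) [NormedAddCommGroup X] [NormedSpace ℝ X] : Prop :=
  ∃ N : X → ℝ,
    (∀ x, N x = 0 ↔ x = 0) ∧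
    (∀ (c : ℝ) (x : X), N (c • x) = |c| * N x) ∧
    (∀ x y, N (x + y) ≤ N x + N y) ∧
    (∃ c₁ > (0 : ℝ), ∃ c₂ > (0 : ℝ), ∀ x, c₁ * ‖x‖ ≤ N x ∧ N x ≤ c₂ * ‖x‖) ∧
    (∀ ε > (0 : ℝ), ∃ δ > (0 : ℝ), ∀ x y,
      N x ≤ 1 → N y ≤ 1 → ε ≤ N (x - y) → N (x + y) ≤ 2 - δ)

/-!
Send a vertex `K` of the tree to the element `treeLamp n K` with cursor at `2|K|` and lit lamps
`treeCode K`: lamp `2i` for `i < |K|`, recording the depth, and lamp `2i + 1` iff `K i = 1`.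
Appending a letter to `K` costs the four generators `t⁻¹, ta, (ta or t), t`, so passing through
the common prefix gives `ρ ≤ 4 d_T`. Conversely, if `A ≠ B` first differ at depth `k`, one of
the lamps `2k`, `2k + 1` differs between their images, and a walk toggling a lamp must visit it.
All cursors lie in the first two thirds of `Z_n`, so going around the circle is no shortcut,
and the walk has length at least `(|A| - k) + (|B| - k) = d_T(A, B)`.
-/

section Letters

variable {n : ℕ}

@[simp]
lemma lampMul_lampT (x : Lamp n) : lampMul x (lampT n) = (x.1, x.2 + 1) := by
  simp [lampMul, lampT]

@[simp]
lemma lampMul_lampTA (x : Lamp n) : lampMul x (lampTA n) = (x.1 ∆ {x.2 + 1}, x.2 + 1) := by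
  simp [lampMul, lampTA, lampT, lampA]

@[simp]
lemma lampMul_lampInv_lampT (x : Lamp n) : lampMul x (lampInv (lampT n)) = (x.1, x.2 - 1) := by
  simp [lampMul, lampInv, lampT, sub_eq_add_neg]

@[simp]
lemma lampMul_lampInv_lampTA (x : Lamp n) :
    lampMul x (lampInv (lampTA n)) = (x.1 ∆ {x.2}, x.2 - 1) := by
  simp [lampMul, lampInv, lampTA, lampT, lampA, sub_eq_add_neg]

def lampLetter (n : ℕ) : Set (Lamp n) :=
  {s | s ∈ ({lampT n, lampTA n} : Set (Lamp n)) ∨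
    ∃ g ∈ ({lampT n, lampTA n} : Set (Lamp n)), s = lampInv g}

@[simp]
lemma lampT_mem_lampLetter : lampT n ∈ lampLetter n := .inl (.inl rfl)

@[simp]
lemma lampTA_mem_lampLetter : lampTA n ∈ lampLetter n := .inl (.inr rfl)

@[simp]
lemma lampInv_lampT_mem_lampLetter : lampInv (lampT n) ∈ lampLetter n :=
  .inr ⟨_, .inl rfl, rfl⟩

@[simp]
lemma lampInv_lampTA_mem_lampLetter : lampInv (lampTA n) ∈ lampLetter n :=
  .inr ⟨_, .inr rfl, rfl⟩

lemma mem_lampLetter {s : Lamp n} :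
    s ∈ lampLetter n ↔
      s = lampT n ∨ s = lampTA n ∨ s = lampInv (lampT n) ∨ s = lampInv (lampTA n) := by
  simp [lampLetter, or_assoc]

lemma exists_lampLetter_lampMul_cancel {s : Lamp n} (hs : s ∈ lampLetter n) (u : Lamp n) :
    ∃ s' ∈ lampLetter n, lampMul (lampMul u s) s' = u := by
  rcases mem_lampLetter.1 hs with rfl | rfl | rfl | rfl
  · exact ⟨lampInv (lampT n), by simp, by simp⟩
  · exact ⟨lampInv (lampTA n), by simp, by simp⟩
  · exact ⟨lampT n, by simp, by simp⟩
  · exact ⟨lampTA n, by simp, by simp⟩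

end Letters

section CyclicDist

variable {n : ℕ}

def cyclicDist (a b : ZMod n) : ℕ := (b - a).valMinAbs.natAbs

@[simp]
lemma cyclicDist_self (a : ZMod n) : cyclicDist a a = 0 := by
  simp [cyclicDist]

lemma cyclicDist_comm (a b : ZMod n) : cyclicDist a b = cyclicDist b a := by
  rw [cyclicDist, cyclicDist, ← neg_sub, ZMod.natAbs_valMinAbs_neg]

lemma cyclicDist_triangle (a b c : ZMod n) :
    cyclicDist a c ≤ cyclicDist a b + cyclicDist b c := by
  unfold cyclicDist
  calc (c - a).valMinAbs.natAbs = ((b - a) + (c - b)).valMinAbs.natAbs := by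
        rw [add_comm, sub_add_sub_cancel]
    _ ≤ ((b - a).valMinAbs + (c - b).valMinAbs).natAbs := ZMod.natAbs_valMinAbs_add_le _ _
    _ ≤ _ := Int.natAbs_add_le _ _

lemma cyclicDist_add_one_le (a : ZMod n) : cyclicDist a (a + 1) ≤ 1 := by
  rcases n with _ | n
  · simp [cyclicDist]
  · rw [cyclicDist, add_sub_cancel_left, ZMod.valMinAbs_natAbs_eq_min]
    exact (min_le_left _ _).trans ((ZMod.val_one_eq_one_mod _).trans_le (Nat.mod_le _ _))

lemma cyclicDist_sub_one_le (a : ZMod n) : cyclicDist a (a - 1) ≤ 1 := by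
  have h := cyclicDist_add_one_le (a - 1)
  rw [sub_add_cancel] at h
  rwa [cyclicDist_comm]

lemma cyclicDist_natCast [NeZero n] {x y : ℕ} (hxy : x ≤ y) (hy : y < n) :
    cyclicDist (x : ZMod n) (y : ZMod n) = min (y - x) (n - (y - x)) := by
  rw [cyclicDist, ← Nat.cast_sub hxy, ZMod.valMinAbs_natAbs_eq_min,
    ZMod.val_cast_of_lt (by omega)]

end CyclicDist

section Steps

variable {n : ℕ} {s : Lamp n}

lemma cyclicDist_lampMul_le_one (hs : s ∈ lampLetter n) (x : Lamp n) :
    cyclicDist x.2 (lampMul x s).2 ≤ 1 := by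
  rcases mem_lampLetter.1 hs with rfl | rfl | rfl | rfl <;>
    simp [cyclicDist_add_one_le, cyclicDist_sub_one_le]

lemma symmDiff_lampMul_subset (hs : s ∈ lampLetter n) (x : Lamp n) :
    x.1 ∆ (lampMul x s).1 ⊆ {x.2, (lampMul x s).2} := by
  rcases mem_lampLetter.1 hs with rfl | rfl | rfl | rfl <;> simp

end Steps

/-- `lampDist n u v` is by definition the least `m` such that `LampWalk n u v m`. -/
def LampWalk (n : ℕ) (u v : Lamp n) (m : ℕ) : Prop :=
  ∃ w : List (Lamp n),
    w.length = m ∧ (∀ s ∈ w, s ∈ lampLetter n) ∧ v = w.foldl lampMul u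

namespace LampWalk

variable {n : ℕ} {u v x : Lamp n} {m m' : ℕ}

lemma refl (u : Lamp n) : LampWalk n u u 0 := ⟨[], rfl, by simp, rfl⟩

lemma single {s : Lamp n} (hs : s ∈ lampLetter n) (u : Lamp n) :
    LampWalk n u (lampMul u s) 1 :=
  ⟨[s], rfl, by simpa using hs, rfl⟩

lemma trans (h : LampWalk n u v m) (h' : LampWalk n v x m') : LampWalk n u x (m + m') := by
  obtain ⟨w, rfl, hw, rfl⟩ := h
  obtain ⟨w', rfl, hw', rfl⟩ := h'
  refine ⟨w ++ w', List.length_append, fun s hs => ?_, (List.foldl_append ..).symm⟩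
  rcases List.mem_append.1 hs with hs | hs
  exacts [hw s hs, hw' s hs]

lemma symm (h : LampWalk n u v m) : LampWalk n v u m := by
  obtain ⟨w, rfl, hw, rfl⟩ := h
  induction w generalizing u with
  | nil => exact refl u
  | cons s w ih =>
    obtain ⟨s', hs', hcancel⟩ := exists_lampLetter_lampMul_cancel (hw s List.mem_cons_self) u
    have hback := single hs' (lampMul u s)
    rw [hcancel] at hback
    exact (ih fun t ht => hw t (List.mem_cons_of_mem s ht)).trans hback

lemma lampDist_le (h : LampWalk n u v m) : lampDist n u v ≤ m := Nat.sInf_le h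

lemma geodesic (h : LampWalk n u v m) : LampWalk n u v (lampDist n u v) :=
  Nat.sInf_mem (s := {m | LampWalk n u v m}) ⟨m, h⟩

lemma le_of_potential (f : Lamp n → ℕ)
    (hf : ∀ x, ∀ s ∈ lampLetter n, f (lampMul x s) ≤ f x + 1) (h : LampWalk n u v m) :
    f v ≤ f u + m := by
  obtain ⟨w, rfl, hw, rfl⟩ := h
  induction w generalizing u with
  | nil => simp
  | cons s w ih =>
    have := ih (u := lampMul u s) fun t ht => hw t (List.mem_cons_of_mem s ht)
    have := hf u s (hw s List.mem_cons_self)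
    simp only [List.foldl_cons, List.length_cons]
    omega

lemma cyclicDist_add_cyclicDist_le {p : ZMod n} (h : LampWalk n u v m) (hp : p ∈ u.1 ∆ v.1) :
    cyclicDist u.2 p + cyclicDist p v.2 ≤ m := by
  classical
  -- the distance travelled from `u.2`, forced through `p` as long as `p` is toggled
  let f : Lamp n → ℕ := fun y =>
    if p ∈ u.1 ∆ y.1 then cyclicDist u.2 p + cyclicDist p y.2 else cyclicDist u.2 y.2
  suffices f v ≤ f u + m by simpa [f, hp] using this
  refine h.le_of_potential f fun x s hs => ?_
  have hxy := cyclicDist_lampMul_le_one hs x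
  have hsub := symmDiff_lampMul_subset hs x
  set y := lampMul x s
  by_cases hx : p ∈ u.1 ∆ x.1 <;> by_cases hy : p ∈ u.1 ∆ y.1 <;>
    simp only [f, hx, hy, if_true, if_false]
  · linarith [cyclicDist_triangle p x.2 y.2]
  · linarith [cyclicDist_triangle u.2 p y.2, cyclicDist_triangle p x.2 y.2]
  · have hpxy : p ∈ x.1 ∆ y.1 := by
      rw [Set.mem_symmDiff] at hx hy ⊢
      tauto
    rcases hsub hpxy with hpx | hpy
    · rw [hpx]
      omega
    · rw [Set.mem_singleton_iff.1 hpy, cyclicDist_self]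
      linarith [cyclicDist_triangle u.2 x.2 y.2]
  · linarith [cyclicDist_triangle u.2 x.2 y.2]

end LampWalk

section TreeDist

lemma lgc_comm : ∀ A B : List Bool, lgc A B = lgc B A
  | [], [] | [], _ :: _ | _ :: _, [] => rfl
  | a :: A, b :: B => by
    by_cases h : a = b
    · simp [lgc, h, lgc_comm A B]
    · simp [lgc, h, Ne.symm h]

lemma lgc_self : ∀ A : List Bool, lgc A A = A.length
  | [] => rfl
  | a :: A => by simp [lgc, lgc_self A]

lemma lgc_le_length_left : ∀ A B : List Bool, lgc A B ≤ A.length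
  | [], _ | _ :: _, [] => by simp [lgc]
  | a :: A, b :: B => by
    have := lgc_le_length_left A B
    simp only [lgc, List.length_cons]
    split_ifs <;> omega

lemma lgc_le_length_right (A B : List Bool) : lgc A B ≤ B.length :=
  lgc_comm A B ▸ lgc_le_length_left B A

lemma take_lgc : ∀ A B : List Bool, A.take (lgc A B) = B.take (lgc A B)
  | [], _ | _ :: _, [] => by simp [lgc]
  | a :: A, b :: B => by
    by_cases h : a = b
    · simp [lgc, h, take_lgc A B]
    · simp [lgc, h]

lemma getElem?_lgc_ne : ∀ {A B : List Bool}, A ≠ B → A[lgc A B]? ≠ B[lgc A B]?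
  | [], [], h => absurd rfl h
  | [], _ :: _, _ | _ :: _, [], _ => by simp [lgc]
  | a :: A, b :: B, h => by
    by_cases hab : a = b
    · subst hab
      simpa [lgc] using getElem?_lgc_ne (A := A) (B := B) (by simpa using h)
    · simp [lgc, hab]

lemma treeDist_eq (A B : List Bool) :
    treeDist A B = (A.length - lgc A B) + (B.length - lgc A B) := by
  have := lgc_le_length_left A B
  have := lgc_le_length_right A B
  unfold treeDist
  omega

end TreeDist

section TreeCode

def treeCode (K : List Bool) : Set ℕ :=
  {m | m / 2 < K.length ∧ (m % 2 = 0 ∨ K[m / 2]? = some true)}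

variable {K : List Bool}

lemma two_mul_mem_treeCode {i : ℕ} : 2 * i ∈ treeCode K ↔ i < K.length := by
  simp [treeCode]

lemma two_mul_add_one_mem_treeCode {i : ℕ} : 2 * i + 1 ∈ treeCode K ↔ K[i]? = some true := by
  have : (2 * i + 1) / 2 = i := by omega
  simp only [treeCode, Set.mem_ofPred_eq, this]
  exact ⟨fun h => h.2.resolve_left (by omega),
    fun h => ⟨(List.getElem?_eq_some_iff.1 h).1, .inr h⟩⟩

lemma lt_of_mem_treeCode {m : ℕ} (h : m ∈ treeCode K) : m < 2 * K.length := by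
  have := h.1
  omega

lemma treeCode_append_singleton (K : List Bool) (b : Bool) :
    treeCode (K ++ [b]) =
      treeCode K ∆ {2 * K.length} ∆ (if b then {2 * K.length + 1} else ∅) := by
  ext m
  obtain ⟨i, rfl | rfl⟩ := Nat.even_or_odd' m
  · cases b <;> simp [Set.mem_symmDiff, two_mul_mem_treeCode] <;> omega
  · have hodd : 2 * i + 1 ≠ 2 * K.length := by omega
    rcases lt_trichotomy i K.length with hi | rfl | hi
    · cases b <;> simp [Set.mem_symmDiff, two_mul_add_one_mem_treeCode, hodd, hi.ne,
        List.getElem?_append_left hi]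
    · cases b <;> simp [Set.mem_symmDiff, two_mul_add_one_mem_treeCode]
    · have hnone : (K ++ [b])[i]? = none := List.getElem?_eq_none (by simp; omega)
      cases b <;> simp [Set.mem_symmDiff, two_mul_add_one_mem_treeCode, hodd, hi.ne', hnone,
        List.getElem?_eq_none hi.le]

lemma exists_mem_treeCode_symmDiff {A B : List Bool} (h : A ≠ B) :
    ∃ p, 2 * lgc A B ≤ p ∧ p ≤ 2 * lgc A B + 1 ∧ p ∈ treeCode A ∆ treeCode B := by
  have hne := getElem?_lgc_ne h
  set k := lgc A B
  have hdepth : 2 * k ∈ treeCode A ∆ treeCode B → ∃ p, 2 * k ≤ p ∧ p ≤ 2 * k + 1 ∧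
      p ∈ treeCode A ∆ treeCode B := fun hp => ⟨2 * k, le_rfl, by omega, hp⟩
  rcases hA : A[k]? with _ | a <;> rcases hB : B[k]? with _ | b
  · exact absurd (hA.trans hB.symm) hne
  · apply hdepth
    rw [List.getElem?_eq_none_iff] at hA
    rw [List.getElem?_eq_some_iff] at hB
    simp [Set.mem_symmDiff, two_mul_mem_treeCode, hA, hB.1]
  · apply hdepth
    rw [List.getElem?_eq_none_iff] at hB
    rw [List.getElem?_eq_some_iff] at hA
    simp [Set.mem_symmDiff, two_mul_mem_treeCode, hB, hA.1]
  · refine ⟨2 * k + 1, by omega, le_rfl, ?_⟩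
    rw [hA, hB] at hne
    cases a <;> cases b <;> simp_all [Set.mem_symmDiff, two_mul_add_one_mem_treeCode]

end TreeCode

def treeLamp (n : ℕ) (K : List Bool) : Lamp n :=
  (ZMod.val ⁻¹' treeCode K, ((2 * K.length : ℕ) : ZMod n))

section TreeLamp

variable {n : ℕ} [NeZero n]

lemma preimage_val_singleton {m : ℕ} (hm : m < n) :
    ZMod.val ⁻¹' {m} = {(m : ZMod n)} := by
  ext z
  simp only [Set.mem_preimage, Set.mem_singleton_iff]
  constructor
  · rintro rfl
    exact (ZMod.natCast_zmod_val z).symm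
  · rintro rfl
    exact ZMod.val_cast_of_lt hm

lemma treeLamp_append_singleton {K : List Bool} (hK : 2 * K.length + 1 < n) (b : Bool) :
    treeLamp n (K ++ [b]) =
      [lampInv (lampT n), lampTA n, cond b (lampTA n) (lampT n), lampT n].foldl lampMul
        (treeLamp n K) := by
  cases b <;>
    simp [treeLamp, treeCode_append_singleton, Set.preimage_symmDiff,
      preimage_val_singleton hK, preimage_val_singleton (show 2 * K.length < n by omega)] <;>
    ring

lemma lampWalk_treeLamp_append (K L : List Bool) (h : 2 * (K.length + L.length) ≤ n) :
    LampWalk n (treeLamp n K) (treeLamp n (K ++ L)) (4 * L.length) := by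
  induction L generalizing K with
  | nil => simpa using LampWalk.refl _
  | cons b L ih =>
    have hstep : LampWalk n (treeLamp n K) (treeLamp n (K ++ [b])) 4 :=
      ⟨_, rfl, by cases b <;> simp, treeLamp_append_singleton (by simp at h; omega) b⟩
    have hrest := ih (K ++ [b]) (by simp at h ⊢; omega)
    rw [List.append_assoc, List.singleton_append] at hrest
    convert hstep.trans hrest using 1
    simp
    ring

lemma lampWalk_treeLamp {A B : List Bool} (hA : 2 * A.length ≤ n) (hB : 2 * B.length ≤ n) :
    LampWalk n (treeLamp n A) (treeLamp n B) (4 * treeDist A B) := by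
  have hkA := lgc_le_length_left A B
  have hkB := lgc_le_length_right A B
  have hdown := lampWalk_treeLamp_append (n := n) (A.take (lgc A B)) (A.drop (lgc A B))
    (by simp; omega)
  have hup := lampWalk_treeLamp_append (n := n) (B.take (lgc A B)) (B.drop (lgc A B))
    (by simp; omega)
  rw [List.take_append_drop] at hdown hup
  rw [← take_lgc] at hup
  convert hdown.symm.trans hup using 1
  simp [treeDist_eq]
  ring

end TreeLamp

section LowerBound

variable {n : ℕ} {A B : List Bool}

lemma exists_natCast_mem_treeLamp_symmDiff (hA : 2 * A.length ≤ n) (hB : 2 * B.length ≤ n)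
    (h : A ≠ B) : ∃ p : ℕ, 2 * lgc A B ≤ p ∧ p ≤ 2 * lgc A B + 1 ∧ p < n ∧
      (p : ZMod n) ∈ (treeLamp n A).1 ∆ (treeLamp n B).1 := by
  obtain ⟨p, hp₁, hp₂, hp⟩ := exists_mem_treeCode_symmDiff h
  have hpn : p < n := by
    rcases hp with ⟨hpA, -⟩ | ⟨hpB, -⟩
    · linarith [lt_of_mem_treeCode hpA]
    · linarith [lt_of_mem_treeCode hpB]
  refine ⟨p, hp₁, hp₂, hpn, ?_⟩
  rwa [treeLamp, treeLamp, ← Set.preimage_symmDiff, Set.mem_preimage, ZMod.val_cast_of_lt hpn]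

lemma treeLamp_injOn [NeZero n] : Set.InjOn (treeLamp n) {K | 2 * K.length ≤ n} := by
  intro A hA B hB h
  by_contra hne
  obtain ⟨p, -, -, -, hp⟩ := exists_natCast_mem_treeLamp_symmDiff hA hB hne
  simp [h] at hp

lemma sub_le_cyclicDist_natCast [NeZero n] {a k p : ℕ} (hka : k ≤ a) (ha : 3 * a ≤ n)
    (hp₁ : 2 * k ≤ p) (hp₂ : p ≤ 2 * k + 1) (hpn : p < n) :
    a - k ≤ cyclicDist (p : ZMod n) ((2 * a : ℕ) : ZMod n) := by
  rcases hka.eq_or_lt with rfl | hlt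
  · simp
  · rw [cyclicDist_natCast (by omega) (by omega)]
    omega

lemma treeDist_le_lampDist [NeZero n] (hA : 3 * A.length ≤ n) (hB : 3 * B.length ≤ n) :
    treeDist A B ≤ lampDist n (treeLamp n A) (treeLamp n B) := by
  rcases eq_or_ne A B with rfl | hne
  · rw [treeDist, lgc_self]
    omega
  have hA₂ : 2 * A.length ≤ n := by omega
  have hB₂ : 2 * B.length ≤ n := by omega
  obtain ⟨p, hp₁, hp₂, hpn, hp⟩ := exists_natCast_mem_treeLamp_symmDiff hA₂ hB₂ hne
  have hvisit := (lampWalk_treeLamp hA₂ hB₂).geodesic.cyclicDist_add_cyclicDist_le hp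
  have hA' := sub_le_cyclicDist_natCast (lgc_le_length_left A B) hA hp₁ hp₂ hpn
  have hB' := sub_le_cyclicDist_natCast (lgc_le_length_right A B) hB hp₁ hp₂ hpn
  rw [cyclicDist_comm] at hA'
  rw [treeDist_eq]
  exact (add_le_add hA' hB').trans hvisit

end LowerBound

/-- There is an absolute constant `C` such that for every `n` divisible by 6, the
Cayley graph of `Z₂ ≀ Z_n` (generating set `{t, ta}`) contains a subset bilipschitz
equivalent, with distortion at most `C`, to the binary tree `T_{n/3}`. The subset is
the range of the bijection `ψ`. -/
theorem binary_tree_embeds_in_lamplighter :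
    ∃ C : ℝ, 1 ≤ C ∧ ∀ n : ℕ, 0 < n → 6 ∣ n →
      ∃ (V : Set (Lamp n)) (r : ℝ) (ψ : {A : List Bool // A.length ≤ n / 3} → Lamp n),
        0 < r ∧ Function.Injective ψ ∧ Set.range ψ = V ∧
        ∀ s s' : {A : List Bool // A.length ≤ n / 3},
          r * (treeDist s.val s'.val : ℝ) ≤ (lampDist n (ψ s) (ψ s') : ℝ) ∧
          (lampDist n (ψ s) (ψ s') : ℝ) ≤ C * r * (treeDist s.val s'.val : ℝ) := by
  refine ⟨4, by norm_num, fun n hn _ => ?_⟩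
  have : NeZero n := ⟨hn.ne'⟩
  have h3 (s : {A : List Bool // A.length ≤ n / 3}) : 3 * s.1.length ≤ n := by
    have := s.2
    omega
  have h2 (s : {A : List Bool // A.length ≤ n / 3}) : 2 * s.1.length ≤ n := by
    linarith [h3 s]
  refine ⟨_, 1, fun s => treeLamp n s.1, one_pos,
    fun s s' h => Subtype.ext (treeLamp_injOn (h2 s) (h2 s') h), rfl, fun s s' => ⟨?_, ?_⟩⟩
  · rw [one_mul]
    exact_mod_cast treeDist_le_lampDist (h3 s) (h3 s')
  · rw [mul_one]
    exact_mod_cast (lampWalk_treeLamp (h2 s) (h2 s')).lampDist_le
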